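/- For the Schwarz P family, the period functions E(a) = 2∫₀¹ (1−t²)/√(t⁸+at⁴+1) dt + 4∫₀¹ dt/√(16t⁴−16t²+2+a) and F(a) = 8∫₀¹ t/√(t⁸+at⁴+1) dt are well-defined (the integrals converge) for all a > 2, and satisfy E(14) = F(14). -/

import Mathlib

open Real MeasureTheory intervalIntegral

/-- Period `E(a)` in the x and y directions of the Schwarz P family:
`E(a) = 2∫₀¹ (1−t²)/√(t⁸+at⁴+1) dt + 4∫₀¹ dt/√(16t⁴−16t²+2+a)`. -/
noncomputable def schwarzE (a : ℝ) : ℝ :=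
  2 * (∫ t in (0 : ℝ)..1, (1 - t ^ 2) / Real.sqrt (t ^ 8 + a * t ^ 4 + 1)) +
    4 * ∫ t in (0 : ℝ)..1, 1 / Real.sqrt (16 * t ^ 4 - 16 * t ^ 2 + 2 + a)

/-- Period `F(a)` in the z direction of the Schwarz P family:
`F(a) = 8∫₀¹ t/√(t⁸+at⁴+1) dt`. -/
noncomputable def schwarzF (a : ℝ) : ℝ :=
  8 * ∫ t in (0 : ℝ)..1, t / Real.sqrt (t ^ 8 + a * t ^ 4 + 1)

/-!
The integrands are continuous on `[0, 1]` because the radicands are positive, so all three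
integrals converge. At `a = 14` two rational substitutions relate the integrals, writing
`Y t = t⁸ + 14t⁴ + 1`. First, `16t⁴ − 16t² + 16 = 16(t⁴ − t² + 1)`, and `t = 2s/(1 + s²)`
turns `∫₀¹ dt/√(t⁴ − t² + 1)` into `2∫₀¹ (1 − s²)/√(Y s) ds`; hence
`E(14) = 4∫₀¹ (1 − t²)/√(Y t) dt`. Second, the involution `t ↦ (1 − t)/(1 + t)` of `[0, 1]`
exchanges the endpoints and maps `(1 − 2t − t²)/√(Y t) dt` to itself, so that integral
vanishes; i.e. `∫₀¹ (1 − t²)/√Y = 2∫₀¹ t/√Y`, which gives `E(14) = 8∫₀¹ t/√Y = F(14)`.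
-/

lemma pow_eight_add_mul_pow_four_add_one_pos {a : ℝ} (ha : -2 < a) (t : ℝ) :
    0 < t ^ 8 + a * t ^ 4 + 1 := by
  have ht : 0 ≤ t ^ 4 := by positivity
  nlinarith [sq_nonneg (t ^ 4 - 1), mul_nonneg ht (by linarith : (0 : ℝ) ≤ a + 2)]

lemma sixteen_mul_pow_four_sub_sixteen_mul_sq_add_two_add_pos {a : ℝ} (ha : 2 < a) (t : ℝ) :
    0 < 16 * t ^ 4 - 16 * t ^ 2 + 2 + a := by
  nlinarith [sq_nonneg (4 * t ^ 2 - 2)]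

lemma pow_four_sub_sq_add_one_pos (t : ℝ) : 0 < t ^ 4 - t ^ 2 + 1 := by
  nlinarith [sq_nonneg (t ^ 2 - 1 / 2)]

lemma Continuous.div_sqrt {X : Type*} [TopologicalSpace X] {f p : X → ℝ} (hf : Continuous f)
    (hp : Continuous p) (hpos : ∀ x, 0 < p x) : Continuous fun x => f x / √(p x) :=
  hf.div hp.sqrt fun x => (sqrt_pos.2 (hpos x)).ne'

lemma sqrt_sq_mul {c : ℝ} (hc : 0 ≤ c) (y : ℝ) : √(c ^ 2 * y) = c * √y := by
  rw [sqrt_mul (sq_nonneg c), sqrt_sq hc]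

lemma integral_eq_of_comp_mul_deriv {f f' g h : ℝ → ℝ} {a b : ℝ}
    (hf : ∀ x ∈ Set.uIcc a b, HasDerivAt f (f' x) x) (hf' : ContinuousOn f' (Set.uIcc a b))
    (hg : Continuous g) (hgh : ∀ x ∈ Set.uIcc a b, g (f x) * f' x = h x) :
    ∫ x in f a..f b, g x = ∫ x in a..b, h x := by
  rw [← integral_comp_mul_deriv hf hf' hg]
  exact integral_congr hgh

lemma continuous_div_sqrt_sextic {f : ℝ → ℝ} (hf : Continuous f) :
    Continuous fun t => f t / √(t ^ 8 + 14 * t ^ 4 + 1) :=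
  hf.div_sqrt (by fun_prop) (pow_eight_add_mul_pow_four_add_one_pos (by norm_num))

lemma integral_inv_sqrt_quartic_eq :
    ∫ t in (0 : ℝ)..1, 1 / √(t ^ 4 - t ^ 2 + 1) =
      ∫ s in (0 : ℝ)..1, 2 * (1 - s ^ 2) / √(s ^ 8 + 14 * s ^ 4 + 1) := by
  have hφ : ∀ s ∈ Set.uIcc (0 : ℝ) 1, HasDerivAt (fun s : ℝ => 2 * s / (1 + s ^ 2))
      (2 * (1 - s ^ 2) / (1 + s ^ 2) ^ 2) s := fun s _ =>
    (((hasDerivAt_id' s).const_mul 2).fun_div ((hasDerivAt_pow 2 s).const_add 1)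
      (by positivity)).congr_deriv (by ring)
  have hpull : ∀ s ∈ Set.uIcc (0 : ℝ) 1,
      1 / √((2 * s / (1 + s ^ 2)) ^ 4 - (2 * s / (1 + s ^ 2)) ^ 2 + 1) *
        (2 * (1 - s ^ 2) / (1 + s ^ 2) ^ 2) =
      2 * (1 - s ^ 2) / √(s ^ 8 + 14 * s ^ 4 + 1) := by
    intro s _
    have hc : 0 < 1 + s ^ 2 := by positivity
    have hY := pow_eight_add_mul_pow_four_add_one_pos (a := 14) (by norm_num) s
    have hsub : (2 * s / (1 + s ^ 2)) ^ 4 - (2 * s / (1 + s ^ 2)) ^ 2 + 1 =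
        (1 / (1 + s ^ 2) ^ 2) ^ 2 * (s ^ 8 + 14 * s ^ 4 + 1) := by
      field_simp
      ring
    rw [hsub, sqrt_sq_mul (by positivity)]
    field_simp
  have h := integral_eq_of_comp_mul_deriv hφ
    (Continuous.continuousOn (Continuous.div (by fun_prop) (by fun_prop) fun s => by positivity))
    (continuous_const.div_sqrt (by fun_prop) pow_four_sub_sq_add_one_pos) hpull
  norm_num at h ⊢
  exact h

lemma integral_one_sub_two_mul_sub_sq_div_sqrt_sextic_eq_zero :
    ∫ t in (0 : ℝ)..1, (1 - 2 * t - t ^ 2) / √(t ^ 8 + 14 * t ^ 4 + 1) = 0 := by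
  set g : ℝ → ℝ := fun t => (1 - 2 * t - t ^ 2) / √(t ^ 8 + 14 * t ^ 4 + 1) with hg
  have hpos : ∀ t ∈ Set.uIcc (0 : ℝ) 1, 0 < 1 + t := fun t ht => by
    rw [Set.uIcc_of_le zero_le_one] at ht
    linarith [ht.1]
  have hφ : ∀ t ∈ Set.uIcc (0 : ℝ) 1, HasDerivAt (fun t : ℝ => (1 - t) / (1 + t))
      (-2 / (1 + t) ^ 2) t := fun t ht =>
    (((hasDerivAt_id' t).const_sub 1).fun_div ((hasDerivAt_id' t).const_add 1)
      (hpos t ht).ne').congr_deriv (by ring)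
  have hinv : ∀ t ∈ Set.uIcc (0 : ℝ) 1, g ((1 - t) / (1 + t)) * (-2 / (1 + t) ^ 2) = g t := by
    intro t ht
    have hc := hpos t ht
    have hY := pow_eight_add_mul_pow_four_add_one_pos (a := 14) (by norm_num) t
    have hsub : ((1 - t) / (1 + t)) ^ 8 + 14 * ((1 - t) / (1 + t)) ^ 4 + 1 =
        (4 / (1 + t) ^ 4) ^ 2 * (t ^ 8 + 14 * t ^ 4 + 1) := by
      field_simp
      ring
    simp only [hg]
    rw [hsub, sqrt_sq_mul (by positivity)]
    field_simp
    ring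
  have h := integral_eq_of_comp_mul_deriv hφ
    (continuousOn_const.div (by fun_prop) fun t ht => (pow_pos (hpos t ht) 2).ne')
    (continuous_div_sqrt_sextic (f := fun t => 1 - 2 * t - t ^ 2) (by fun_prop)) hinv
  norm_num [integral_symm 1 0] at h
  rw [integral_symm 1 0]
  linarith

lemma integral_one_sub_sq_div_sqrt_sextic_eq :
    ∫ t in (0 : ℝ)..1, (1 - t ^ 2) / √(t ^ 8 + 14 * t ^ 4 + 1) =
      2 * ∫ t in (0 : ℝ)..1, t / √(t ^ 8 + 14 * t ^ 4 + 1) := by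
  have h := integral_one_sub_two_mul_sub_sq_div_sqrt_sextic_eq_zero
  have hsplit : ∀ t : ℝ, (1 - 2 * t - t ^ 2) / √(t ^ 8 + 14 * t ^ 4 + 1) =
      (1 - t ^ 2) / √(t ^ 8 + 14 * t ^ 4 + 1) - 2 * (t / √(t ^ 8 + 14 * t ^ 4 + 1)) :=
    fun t => by ring
  have hint : ∀ f : ℝ → ℝ, Continuous f →
      IntervalIntegrable (fun t => f t / √(t ^ 8 + 14 * t ^ 4 + 1)) volume 0 1 :=
    fun f hf => (continuous_div_sqrt_sextic hf).intervalIntegrable 0 1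
  rw [funext hsplit, integral_sub (hint (fun t => 1 - t ^ 2) (by fun_prop))
    ((hint (fun t => t) continuous_id).const_mul 2), intervalIntegral.integral_const_mul] at h
  linarith

lemma schwarzE_fourteen :
    schwarzE 14 = 4 * ∫ t in (0 : ℝ)..1, (1 - t ^ 2) / √(t ^ 8 + 14 * t ^ 4 + 1) := by
  have h16 : ∀ t : ℝ, 4 * (1 / √(16 * t ^ 4 - 16 * t ^ 2 + 2 + 14)) =
      1 / √(t ^ 4 - t ^ 2 + 1) := fun t => by
    rw [show 16 * t ^ 4 - 16 * t ^ 2 + 2 + 14 = (4 : ℝ) ^ 2 * (t ^ 4 - t ^ 2 + 1) by ring,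
      sqrt_sq_mul (by norm_num)]
    have : 0 < √(t ^ 4 - t ^ 2 + 1) := sqrt_pos.2 (pow_four_sub_sq_add_one_pos t)
    field_simp
  rw [schwarzE, ← intervalIntegral.integral_const_mul 4, funext h16, integral_inv_sqrt_quartic_eq]
  simp only [mul_div_assoc, intervalIntegral.integral_const_mul]
  ring

/-- For all `a > 2`, the integrals defining the Schwarz P period functions `E` and `F`
converge, and `E(14) = F(14)` (the classical Schwarz P surface has a cubic period cell). -/
theorem schwarzP_periods_integrable_and_cubic_at_14 :
    (∀ a : ℝ, 2 < a →
      IntervalIntegrable (fun t => (1 - t ^ 2) / Real.sqrt (t ^ 8 + a * t ^ 4 + 1))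
        volume 0 1 ∧
      IntervalIntegrable (fun t => 1 / Real.sqrt (16 * t ^ 4 - 16 * t ^ 2 + 2 + a))
        volume 0 1 ∧
      IntervalIntegrable (fun t => t / Real.sqrt (t ^ 8 + a * t ^ 4 + 1))
        volume 0 1) ∧
    schwarzE 14 = schwarzF 14 := by
  refine ⟨fun a ha => ⟨?_, ?_, ?_⟩, ?_⟩
  · exact (Continuous.div_sqrt (by fun_prop) (by fun_prop)
      (pow_eight_add_mul_pow_four_add_one_pos (by linarith))).intervalIntegrable 0 1
  · exact (Continuous.div_sqrt (by fun_prop) (by fun_prop)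
      (sixteen_mul_pow_four_sub_sixteen_mul_sq_add_two_add_pos ha)).intervalIntegrable 0 1
  · exact (Continuous.div_sqrt (by fun_prop) (by fun_prop)
      (pow_eight_add_mul_pow_four_add_one_pos (by linarith))).intervalIntegrable 0 1
  · rw [schwarzE_fourteen, integral_one_sub_sq_div_sqrt_sextic_eq, schwarzF]
    ring
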